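/- Let 𝒜 be an abelian category with enough projectives, B an object of 𝒜, and P_B : ⋯ → P^{-2} → P^{-1} → B → 0 an augmented projective resolution of B. For n ≥ 1 let Ω^n(B) = Ker(P^{-n} → P^{-n+1}) (where P^0 = B) be the n-th syzygy, and set Ω^0(B) = B. Then for every object A of 𝒜 and every n ≥ 0 there is an isomorphism of abelian groups H^{-n} Hom_𝒜(A, P_B) ≅ Hom_𝒜(A, Ω^n(B)) / {morphisms A → Ω^n(B) that factor through a projective object}. -/

import Mathlib

open CategoryTheory Limits ZeroObject

universe v u

variable {A : Type u} [Category.{v} A] [Abelian A]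

/-- An augmented projective resolution of `B` : a cochain complex
`⋯ → P^{-2} → P^{-1} → B → 0` concentrated in degrees `≤ 0`, with `B` in degree `0`,
projective terms in negative degrees, which is exact (acyclic). -/
structure IsAugmentedProjResolution (B : A) (C : CochainComplex A ℤ) where
  degZeroIso : C.X 0 ≅ B
  isZero_of_pos : ∀ i : ℤ, 0 < i → Limits.IsZero (C.X i)
  projective : ∀ i : ℤ, i < 0 → Projective (C.X i)
  exactAt : ∀ n : ℤ, C.ExactAt n

/-- `B` has projective dimension at most `n` : there is an exact complex
`0 → Q^{-(n+1)} → ⋯ → Q^{-1} → B → 0` with all the `Q^{-i}` projective, i.e. an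
augmented projective resolution vanishing in degrees `< -(n+1)`. For `n = 0` this
means exactly that `B` is projective. -/
def HasProjDimLE (B : A) (n : ℕ) : Prop :=
  ∃ C : CochainComplex A ℤ, Nonempty (IsAugmentedProjResolution B C) ∧
    ∀ i : ℤ, i < -(n + 1 : ℤ) → Limits.IsZero (C.X i)

/-- The `n`-th syzygy `Ω^n(B)` of `B` with respect to an augmented projective resolution
`P_B`, with `Ω^0(B) = B` and `Ω^n(B) = Ker(P^{-n} → P^{-n+1})` for `n ≥ 1`. -/
noncomputable def syzygy (B : A) (C : CochainComplex A ℤ) : ℕ → A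
  | 0 => B
  | (n + 1) => kernel (C.d (-(n + 1 : ℤ)) (-(n + 1 : ℤ) + 1))

/-- The subgroup of `Hom_𝒜(a, b)` of morphisms factoring through a projective object. -/
def projFactorSubgroup (a b : A) : AddSubgroup (a ⟶ b) where
  carrier := {f | ∃ (T : A) (_ : Projective T) (u : a ⟶ T) (v : T ⟶ b), u ≫ v = f}
  zero_mem' := ⟨0, inferInstance, 0, 0, by simp⟩
  add_mem' := by
    rintro f g ⟨T, hT, u, v, rfl⟩ ⟨T', hT', u', v', rfl⟩
    haveI := hT
    haveI := hT'
    exact ⟨T ⊞ T', inferInstance, biprod.lift u u', biprod.desc v v', by simp⟩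
  neg_mem' := by
    rintro f ⟨T, hT, u, v, rfl⟩
    exact ⟨T, hT, -u, v, by simp⟩

/-- Composition with an isomorphism induces an isomorphism of stable Hom groups. -/
noncomputable def stableHomCongr (A₀ : A) {X Y : A} (e : X ≅ Y) :
    ((A₀ ⟶ X) ⧸ projFactorSubgroup A₀ X) ≃+ ((A₀ ⟶ Y) ⧸ projFactorSubgroup A₀ Y) := by
  refine QuotientAddGroup.congr _ _
    (AddEquiv.mk' ⟨fun f => f ≫ e.hom, fun g => g ≫ e.inv, fun f => by simp, fun g => by simp⟩
      (fun f g => by simp [Preadditive.add_comp])) ?_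
  ext g
  constructor
  · rintro ⟨f, ⟨T, hT, u, v, rfl⟩, rfl⟩
    exact ⟨T, hT, u, v ≫ e.hom, by show u ≫ v ≫ e.hom = (u ≫ v) ≫ e.hom; simp⟩
  · rintro ⟨T, hT, u, v, rfl⟩
    exact ⟨(u ≫ v) ≫ e.inv, ⟨T, hT, u, v ≫ e.inv, by simp⟩, by show ((u ≫ v) ≫ e.inv) ≫ e.hom = u ≫ v; simp⟩

theorem lowerExt_aux {B : A} {P : CochainComplex A ℤ}
    (hP : IsAugmentedProjResolution B P) (A₀ : A) (j : ℤ) (hj : j ≤ 0) :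
    Nonempty (((((preadditiveCoyoneda.obj (Opposite.op A₀)).mapHomologicalComplex
        (ComplexShape.up ℤ)).obj P).homology j : AddCommGrpCat) ≃+
      ((A₀ ⟶ kernel (P.d j (j + 1))) ⧸ projFactorSubgroup A₀ (kernel (P.d j (j + 1))))) := by
  set F := preadditiveCoyoneda.obj (Opposite.op A₀) with hF
  set Q := (F.mapHomologicalComplex (ComplexShape.up ℤ)).obj P with hQdef
  set S := Q.sc' (j - 1) j (j + 1) with hS
  -- the homology as a concrete quotient
  have e1 : (Q.homology j : AddCommGrpCat) ≅ S.homology :=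
    Q.homologyIsoSc' (j - 1) j (j + 1) (CochainComplex.prev ℤ j) (CochainComplex.next ℤ j)
  have e2 : S.homology ≅
      AddCommGrpCat.of ((AddMonoidHom.ker S.g.hom) ⧸ AddMonoidHom.range S.abToCycles) :=
    S.abHomologyIso
  -- the syzygy-type kernel and the canonical epimorphism onto it
  have hd : P.d (j - 1) j ≫ P.d j (j + 1) = 0 := P.d_comp_d _ _ _
  set π : P.X (j - 1) ⟶ kernel (P.d j (j + 1)) := kernel.lift _ (P.d (j - 1) j) hd with hπdef
  have hπι : π ≫ kernel.ι _ = P.d (j - 1) j := kernel.lift_ι _ _ _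
  have hπ : Epi π := by
    have hex : (P.sc' (j - 1) j (j + 1)).Exact := by
      rw [← P.exactAt_iff' (j - 1) j (j + 1) (CochainComplex.prev ℤ j) (CochainComplex.next ℤ j)]
      exact hP.exactAt j
    exact (P.sc' (j - 1) j (j + 1)).exact_iff_epi_kernel_lift.1 hex
  -- the concrete cycles as morphisms into the kernel
  have hg : ∀ x : (A₀ ⟶ P.X j), S.g x = x ≫ P.d j (j + 1) := fun _ => rfl
  have hf : ∀ x : (A₀ ⟶ P.X (j - 1)), S.f x = x ≫ P.d (j - 1) j := fun _ => rfl
  let e3 : AddMonoidHom.ker S.g.hom ≃+ (A₀ ⟶ kernel (P.d j (j + 1))) :=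
    { toFun := fun φ => kernel.lift (P.d j (j + 1)) (φ.1 : A₀ ⟶ P.X j) φ.2
      invFun := fun ψ => ⟨(ψ ≫ kernel.ι _ : A₀ ⟶ P.X j), by
        show (ψ ≫ kernel.ι _) ≫ P.d j (j + 1) = 0
        simp⟩
      left_inv := fun φ => Subtype.ext (kernel.lift_ι _ _ _)
      right_inv := fun ψ => by
        rw [← cancel_mono (kernel.ι (P.d j (j + 1)))]
        simp
      map_add' := fun φ φ' => by
        rw [← cancel_mono (kernel.ι (P.d j (j + 1)))]
        show kernel.lift _ ((φ.1 + φ'.1 : A₀ ⟶ P.X j)) _ ≫ _ = _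
        exact (kernel.lift_ι _ _ _).trans
          ((congrArg₂ (· + ·) (kernel.lift_ι _ _ _).symm (kernel.lift_ι _ _ _).symm).trans
            (Preadditive.add_comp _ _ _ _ _ _).symm) }
  have he3 : ∀ φ : AddMonoidHom.ker S.g.hom,
      e3 φ = kernel.lift (P.d j (j + 1)) (φ.1 : A₀ ⟶ P.X j) φ.2 := fun _ => rfl
  have hmap : (AddMonoidHom.range S.abToCycles).map (e3 : AddMonoidHom.ker S.g.hom →+ _) =
      projFactorSubgroup A₀ (kernel (P.d j (j + 1))) := by
    ext ψ
    simp only [AddSubgroup.mem_map, AddMonoidHom.mem_range, AddMonoidHom.coe_coe]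
    constructor
    · rintro ⟨φ, ⟨x, rfl⟩, rfl⟩
      refine ⟨P.X (j - 1), hP.projective _ (by omega), (x : A₀ ⟶ P.X (j - 1)), π, ?_⟩
      rw [← cancel_mono (kernel.ι (P.d j (j + 1)))]
      refine (Category.assoc (x : A₀ ⟶ P.X (j - 1)) π _).trans ?_
      rw [hπι, he3]
      refine Eq.trans ?_ (kernel.lift_ι _ _ _).symm
      exact (hf x).symm
    · rintro ⟨T, hT, u, v, rfl⟩
      haveI := hT
      refine ⟨S.abToCycles (u ≫ Projective.factorThru v π : A₀ ⟶ P.X (j - 1)), ⟨_, rfl⟩, ?_⟩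
      rw [he3, ← cancel_mono (kernel.ι (P.d j (j + 1)))]
      refine (kernel.lift_ι _ _ _).trans ?_
      show (u ≫ Projective.factorThru v π) ≫ P.d (j - 1) j = (u ≫ v) ≫ kernel.ι _
      calc (u ≫ Projective.factorThru v π) ≫ P.d (j - 1) j
          = u ≫ (Projective.factorThru v π ≫ π) ≫ kernel.ι (P.d j (j + 1)) := by
            rw [← hπι]; simp only [Category.assoc]
        _ = (u ≫ v) ≫ kernel.ι (P.d j (j + 1)) := by
            rw [Projective.factorThru_comp]; simp only [Category.assoc]
  exact ⟨(e1 ≪≫ e2).addCommGroupIsoToAddEquiv.trans (QuotientAddGroup.congr _ _ e3 hmap)⟩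

/-- Example 2.5, isomorphism (2.2): for an abelian category `𝒜` with enough projectives,
an augmented projective resolution `P_B` of `B`, every object `A₀` and every `n ≥ 0`,
there is an isomorphism of abelian groups
`H^{-n} Hom_𝒜(A₀, P_B) ≅ Hom_𝒜(A₀, Ω^n(B)) / {morphisms factoring through a projective}`,
i.e. the lower extension group `Ext_{𝒫,n}(A₀,B)` is the Hom group to the `n`-th syzygy
`Ω^n(B)` in the projectively stable category. -/
theorem lowerExt_iso_stableHom_syzygy [EnoughProjectives A]
    {B : A} {P : CochainComplex A ℤ} (hP : IsAugmentedProjResolution B P)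
    (A₀ : A) (n : ℕ) :
    Nonempty (((((preadditiveCoyoneda.obj (Opposite.op A₀)).mapHomologicalComplex
        (ComplexShape.up ℤ)).obj P).homology (-(n : ℤ)) : AddCommGrpCat) ≃+
      ((A₀ ⟶ syzygy B P n) ⧸ projFactorSubgroup A₀ (syzygy B P n))) := by
  cases n with
  | zero =>
    obtain ⟨e⟩ := lowerExt_aux hP A₀ (-((0 : ℕ) : ℤ)) (by norm_num)
    refine ⟨e.trans (stableHomCongr A₀ ?_)⟩
    have hz : P.d (-((0 : ℕ) : ℤ)) (-((0 : ℕ) : ℤ) + 1) = 0 :=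
      (hP.isZero_of_pos _ (by norm_num)).eq_of_tgt _ _
    exact kernelIsoOfEq hz ≪≫ kernelZeroIsoSource ≪≫
      P.XIsoOfEq (by norm_num) ≪≫ hP.degZeroIso
  | succ n =>
    obtain ⟨e⟩ := lowerExt_aux hP A₀ (-((n + 1 : ℕ) : ℤ)) (by omega)
    exact ⟨e⟩
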